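/- arXiv:1906.03127 — 2 statements merged into one kernel-verified Lean document; each statement's English description precedes it below -/
import Mathlib

section
/- Let n ≥ 1 and let S⁺, S⁻ : ℝⁿ → ℝ be C² functions. Define x(u,v) = ½(u + v, ∇S⁺(u) + ∇S⁻(v)) and y(u,v) = ½(u − v, ∇S⁺(u) − ∇S⁻(v)) as maps ℝⁿ × ℝⁿ → ℝⁿ × ℝⁿ, and define f(u,v) = ½S⁺(u) − ½S⁻(v) − ¼⟨u − v, ∇S⁺(u) + ∇S⁻(v)⟩. Then for all (u,v) and all indices i, j: ∂f/∂uᵢ(u,v) = ω(∂x/∂uᵢ(u,v), y(u,v)) and ∂f/∂vⱼ(u,v) = ω(∂x/∂vⱼ(u,v), y(u,v)). -/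
/-!
Both sides are linear in the direction `(a, b)`, so we compare the differentials `df` and
`ω(dx, y)` as 1-forms. The second-order terms `¼⟨u - v, D∇S⁺(u) a + D∇S⁻(v) b⟩` occur in both,
and the first-order ones agree because
`½⟨a, ∇S⁺⟩ - ½⟨b, ∇S⁻⟩ - ¼⟨a - b, ∇S⁺ + ∇S⁻⟩ = ¼⟨a + b, ∇S⁺ - ∇S⁻⟩`.
-/

open scoped BigOperators

/-- The canonical symplectic form on `ℝⁿ × ℝⁿ`:
`ω((a,b),(c,d)) = ⟨a,d⟩ − ⟨b,c⟩`. -/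
noncomputable def symp (n : ℕ) (a b : (Fin n → ℝ) × (Fin n → ℝ)) : ℝ :=
  (∑ i, a.1 i * b.2 i) - (∑ i, a.2 i * b.1 i)

noncomputable section

section Calculus

variable {𝕜 ι E F G : Type*} [NontriviallyNormedField 𝕜] [Fintype ι]
  [NormedAddCommGroup E] [NormedSpace 𝕜 E] [NormedAddCommGroup F] [NormedSpace 𝕜 F]
  [NormedAddCommGroup G] [NormedSpace 𝕜 G]

def dotProductCLM (c : ι → 𝕜) : (ι → 𝕜) →L[𝕜] 𝕜 :=
  ∑ i, c i • ContinuousLinearMap.proj i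

@[simp]
theorem dotProductCLM_apply (c a : ι → 𝕜) : dotProductCLM c a = c ⬝ᵥ a := by
  simp [dotProductCLM, dotProduct]

theorem HasFDerivAt.dotProduct {f g : E → ι → 𝕜} {f' g' : E →L[𝕜] ι → 𝕜} {p : E}
    (hf : HasFDerivAt f f' p) (hg : HasFDerivAt g g' p) :
    HasFDerivAt (fun q ↦ f q ⬝ᵥ g q)
      ((dotProductCLM (f p)).comp g' + (dotProductCLM (g p)).comp f') p := by
  refine (HasFDerivAt.fun_sum (u := Finset.univ) fun i _ ↦
    (hasFDerivAt_pi'.1 hf i).mul (hasFDerivAt_pi'.1 hg i)).congr_fderiv ?_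
  ext w
  simp only [Finset.sum_add_distrib, add_apply, sum_apply, smul_apply,
    ContinuousLinearMap.comp_apply, ContinuousLinearMap.proj_apply, smul_eq_mul,
    dotProductCLM_apply]
  rfl

theorem HasFDerivAt.comp_fst_add_comp_snd {g : E → G} {h : F → G} {g' : E →L[𝕜] G}
    {h' : F →L[𝕜] G} {u : E} {v : F} (hg : HasFDerivAt g g' u) (hh : HasFDerivAt h h' v) :
    HasFDerivAt (fun p : E × F ↦ g p.1 + h p.2)
      (g'.comp (.fst 𝕜 E F) + h'.comp (.snd 𝕜 E F)) (u, v) :=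
  (hg.comp (u, v) hasFDerivAt_fst).add (hh.comp (u, v) (hasFDerivAt_snd (𝕜 := 𝕜) (p := (u, v))))

end Calculus

section Gradient

variable {𝕜 ι : Type*} [Fintype ι] [DecidableEq ι]

theorem LinearMap.apply_eq_dotProduct [CommSemiring 𝕜] (L : (ι → 𝕜) →ₗ[𝕜] 𝕜) (a : ι → 𝕜) :
    L a = a ⬝ᵥ fun i ↦ L (Pi.single i 1) := by
  conv_lhs => rw [← Finset.univ_sum_single a]
  simp only [map_sum, dotProduct]
  refine Finset.sum_congr rfl fun i _ ↦ ?_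
  rw [← smul_eq_mul, ← L.map_smul, ← Pi.single_smul', smul_eq_mul, mul_one]

variable [NontriviallyNormedField 𝕜]

def coordGradient (S : (ι → 𝕜) → 𝕜) (u : ι → 𝕜) : ι → 𝕜 :=
  fun i ↦ fderiv 𝕜 S u (Pi.single i 1)

theorem fderiv_apply_eq_dotProduct_coordGradient (S : (ι → 𝕜) → 𝕜) (u a : ι → 𝕜) :
    fderiv 𝕜 S u a = a ⬝ᵥ coordGradient S u :=
  (fderiv 𝕜 S u).toLinearMap.apply_eq_dotProduct a

theorem ContDiff.differentiable_coordGradient {S : (ι → 𝕜) → 𝕜} (hS : ContDiff 𝕜 2 S) :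
    Differentiable 𝕜 (coordGradient S) := by
  have hDS : Differentiable 𝕜 (fderiv 𝕜 S) :=
    (hS.fderiv_right (m := 1) (by norm_num)).differentiable one_ne_zero
  exact differentiable_pi.2 fun i ↦ hDS.clm_apply (differentiable_const _)

end Gradient

theorem symp_eq_dotProduct {n : ℕ} (a b : (Fin n → ℝ) × (Fin n → ℝ)) :
    symp n a b = a.1 ⬝ᵥ b.2 - a.2 ⬝ᵥ b.1 :=
  rfl

/- The maps `x`, `y` and `f` of the center-chord construction, as functions of `(u, v)`, for the
Lagrangian graphs `α±(u) = (u, ∇S±(u))`. -/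
namespace CenterChord

variable {n : ℕ}

def center (Sp Sm : (Fin n → ℝ) → ℝ) (p : (Fin n → ℝ) × (Fin n → ℝ)) :
    (Fin n → ℝ) × (Fin n → ℝ) :=
  ((1 / 2 : ℝ) • (p.1 + p.2), (1 / 2 : ℝ) • (coordGradient Sp p.1 + coordGradient Sm p.2))

def chord (Sp Sm : (Fin n → ℝ) → ℝ) (p : (Fin n → ℝ) × (Fin n → ℝ)) :
    (Fin n → ℝ) × (Fin n → ℝ) :=
  ((1 / 2 : ℝ) • (p.1 - p.2), (1 / 2 : ℝ) • (coordGradient Sp p.1 - coordGradient Sm p.2))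

def potential (Sp Sm : (Fin n → ℝ) → ℝ) (p : (Fin n → ℝ) × (Fin n → ℝ)) : ℝ :=
  1 / 2 * Sp p.1 - 1 / 2 * Sm p.2 -
    1 / 4 * ((p.1 - p.2) ⬝ᵥ (coordGradient Sp p.1 + coordGradient Sm p.2))

variable {Sp Sm : (Fin n → ℝ) → ℝ} {u v : Fin n → ℝ}

theorem fderiv_center_apply (hgp : DifferentiableAt ℝ (coordGradient Sp) u)
    (hgm : DifferentiableAt ℝ (coordGradient Sm) v) (a b : Fin n → ℝ) :
    fderiv ℝ (center Sp Sm) (u, v) (a, b) =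
      ((1 / 2 : ℝ) • (a + b),
        (1 / 2 : ℝ) • (fderiv ℝ (coordGradient Sp) u a + fderiv ℝ (coordGradient Sm) v b)) := by
  have h : HasFDerivAt (center Sp Sm) _ (u, v) :=
    (((hasFDerivAt_fst (p := (u, v))).add hasFDerivAt_snd).const_smul (1 / 2 : ℝ)).prodMk
      ((hgp.hasFDerivAt.comp_fst_add_comp_snd hgm.hasFDerivAt).const_smul (1 / 2 : ℝ))
  simp only [h.fderiv, ContinuousLinearMap.prod_apply, smul_apply, add_apply,
    ContinuousLinearMap.comp_apply, ContinuousLinearMap.coe_fst', ContinuousLinearMap.coe_snd']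

theorem fderiv_potential_apply (hSp : DifferentiableAt ℝ Sp u) (hSm : DifferentiableAt ℝ Sm v)
    (hgp : DifferentiableAt ℝ (coordGradient Sp) u)
    (hgm : DifferentiableAt ℝ (coordGradient Sm) v) (a b : Fin n → ℝ) :
    fderiv ℝ (potential Sp Sm) (u, v) (a, b) =
      1 / 2 * fderiv ℝ Sp u a - 1 / 2 * fderiv ℝ Sm v b -
        1 / 4 * ((u - v) ⬝ᵥ (fderiv ℝ (coordGradient Sp) u a + fderiv ℝ (coordGradient Sm) v b) +
          (coordGradient Sp u + coordGradient Sm v) ⬝ᵥ (a - b)) := by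
  have h : HasFDerivAt (potential Sp Sm) _ (u, v) :=
    (((hSp.hasFDerivAt.comp (u, v) hasFDerivAt_fst).const_mul (1 / 2)).sub
      ((hSm.hasFDerivAt.comp (u, v) (hasFDerivAt_snd (𝕜 := ℝ) (p := (u, v)))).const_mul
        (1 / 2))).sub
      ((((hasFDerivAt_fst (p := (u, v))).sub hasFDerivAt_snd).dotProduct
        (hgp.hasFDerivAt.comp_fst_add_comp_snd hgm.hasFDerivAt)).const_mul (1 / 4))
  simp only [h.fderiv, sub_apply, add_apply, smul_apply, ContinuousLinearMap.comp_apply,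
    ContinuousLinearMap.coe_fst', ContinuousLinearMap.coe_snd', dotProductCLM_apply,
    Pi.sub_apply, smul_eq_mul]

theorem fderiv_potential_eq_symp (hSp : DifferentiableAt ℝ Sp u)
    (hSm : DifferentiableAt ℝ Sm v) (hgp : DifferentiableAt ℝ (coordGradient Sp) u)
    (hgm : DifferentiableAt ℝ (coordGradient Sm) v) (w : (Fin n → ℝ) × (Fin n → ℝ)) :
    fderiv ℝ (potential Sp Sm) (u, v) w =
      symp n (fderiv ℝ (center Sp Sm) (u, v) w) (chord Sp Sm (u, v)) := by
  obtain ⟨a, b⟩ := w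
  rw [fderiv_potential_apply hSp hSm hgp hgm, fderiv_center_apply hgp hgm, symp_eq_dotProduct,
    fderiv_apply_eq_dotProduct_coordGradient, fderiv_apply_eq_dotProduct_coordGradient,
    chord, dotProduct_comm _ (_ • (u - v))]
  simp only [add_dotProduct, dotProduct_add, sub_dotProduct, dotProduct_sub, smul_dotProduct,
    dotProduct_smul, smul_eq_mul, dotProduct_comm a, dotProduct_comm b]
  ring

end CenterChord

end

theorem stmt1_general (n : ℕ)
    (Sp Sm : (Fin n → ℝ) → ℝ) (hSp : ContDiff ℝ 2 Sp) (hSm : ContDiff ℝ 2 Sm)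
    (gradp gradm : (Fin n → ℝ) → (Fin n → ℝ))
    (hgp : ∀ (u : Fin n → ℝ) (i : Fin n), gradp u i = fderiv ℝ Sp u (Pi.single i 1))
    (hgm : ∀ (v : Fin n → ℝ) (i : Fin n), gradm v i = fderiv ℝ Sm v (Pi.single i 1))
    (x y : (Fin n → ℝ) × (Fin n → ℝ) → (Fin n → ℝ) × (Fin n → ℝ))
    (f : (Fin n → ℝ) × (Fin n → ℝ) → ℝ)
    (hx : ∀ u v, x (u, v) = (((1:ℝ)/2) • (u + v), ((1:ℝ)/2) • (gradp u + gradm v)))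
    (hy : ∀ u v, y (u, v) = (((1:ℝ)/2) • (u - v), ((1:ℝ)/2) • (gradp u - gradm v)))
    (hf : ∀ u v, f (u, v) =
      (1/2) * Sp u - (1/2) * Sm v - (1/4) * ∑ i, (u i - v i) * (gradp u i + gradm v i)) :
    ∀ (u v : Fin n → ℝ) (i j : Fin n),
      fderiv ℝ f (u, v) (Pi.single i 1, 0) =
        symp n (fderiv ℝ x (u, v) (Pi.single i 1, 0)) (y (u, v)) ∧
      fderiv ℝ f (u, v) (0, Pi.single j 1) =
        symp n (fderiv ℝ x (u, v) (0, Pi.single j 1)) (y (u, v)) := by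
  obtain rfl : gradp = coordGradient Sp := funext₂ hgp
  obtain rfl : gradm = coordGradient Sm := funext₂ hgm
  obtain rfl : x = CenterChord.center Sp Sm := funext fun p ↦ hx p.1 p.2
  obtain rfl : y = CenterChord.chord Sp Sm := funext fun p ↦ hy p.1 p.2
  obtain rfl : f = CenterChord.potential Sp Sm := funext fun p ↦ hf p.1 p.2
  intro u v i j
  have key := CenterChord.fderiv_potential_eq_symp (hSp.differentiable (by norm_num) u)
    (hSm.differentiable (by norm_num) v) (hSp.differentiable_coordGradient u)
    (hSm.differentiable_coordGradient v)
  exact ⟨key _, key _⟩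

theorem stmt1 (n : ℕ) (hn : 1 ≤ n)
    (Sp Sm : (Fin n → ℝ) → ℝ) (hSp : ContDiff ℝ 2 Sp) (hSm : ContDiff ℝ 2 Sm)
    (gradp gradm : (Fin n → ℝ) → (Fin n → ℝ))
    (hgp : ∀ (u : Fin n → ℝ) (i : Fin n), gradp u i = fderiv ℝ Sp u (Pi.single i 1))
    (hgm : ∀ (v : Fin n → ℝ) (i : Fin n), gradm v i = fderiv ℝ Sm v (Pi.single i 1))
    (x y : (Fin n → ℝ) × (Fin n → ℝ) → (Fin n → ℝ) × (Fin n → ℝ))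
    (f : (Fin n → ℝ) × (Fin n → ℝ) → ℝ)
    (hx : ∀ u v, x (u, v) = (((1:ℝ)/2) • (u + v), ((1:ℝ)/2) • (gradp u + gradm v)))
    (hy : ∀ u v, y (u, v) = (((1:ℝ)/2) • (u - v), ((1:ℝ)/2) • (gradp u - gradm v)))
    (hf : ∀ u v, f (u, v) =
      (1/2) * Sp u - (1/2) * Sm v - (1/4) * ∑ i, (u i - v i) * (gradp u i + gradm v i)) :
    ∀ (u v : Fin n → ℝ) (i j : Fin n),
      fderiv ℝ f (u, v) (Pi.single i 1, 0) =
        symp n (fderiv ℝ x (u, v) (Pi.single i 1, 0)) (y (u, v)) ∧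
      fderiv ℝ f (u, v) (0, Pi.single j 1) =
        symp n (fderiv ℝ x (u, v) (0, Pi.single j 1)) (y (u, v)) :=
  stmt1_general n Sp Sm hSp hSm gradp gradm hgp hgm x y f hx hy hf
end

section
/- For s, t ∈ ℝ define x(s,t) = (Re cos(s+it), Re sin(s+it)), y(s,t) = (Im cos(s+it), Im sin(s+it)), and f(s,t) = ¼(sinh(2t) − 2t), where cos and sin denote the complex cosine and sine. Then for all (s,t) ∈ ℝ²: (i) x(s,t) = cosh(t) · (cos s, sin s); (ii) y(s,t) = sinh(t) · (−sin s, cos s); (iii) ∂f/∂s(s,t) = ω(∂x/∂s(s,t), y(s,t)) and ∂f/∂t(s,t) = ω(∂x/∂t(s,t), y(s,t)). -/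
/-! With `z = s + it`, `cos z = cos s cosh t - i sin s sinh t` and
`sin z = sin s cosh t + i cos s sinh t`, which gives (i) and (ii). Then `∂x/∂s` is parallel to
`y`, so `ω(∂x/∂s, y) = 0 = ∂f/∂s`, while `ω(∂x/∂t, y) = sinh² t = (cosh 2t - 1) / 2 = ∂f/∂t`. -/

/-- The canonical symplectic form on `ℝ²`: `ω((a₁,a₂),(c₁,c₂)) = a₁c₂ − a₂c₁`. -/
def omega2 (a c : ℝ × ℝ) : ℝ := a.1 * c.2 - a.2 * c.1

open Real

namespace Complex

theorem cos_ofReal_add_ofReal_mul_I_re (s t : ℝ) :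
    (cos (s + t * I)).re = Real.cos s * Real.cosh t := by
  simp [cos_add_mul_I, ← ofReal_cos, ← ofReal_cosh, ← ofReal_sin, ← ofReal_sinh]

theorem cos_ofReal_add_ofReal_mul_I_im (s t : ℝ) :
    (cos (s + t * I)).im = -(Real.sin s * Real.sinh t) := by
  simp [cos_add_mul_I, ← ofReal_cos, ← ofReal_cosh, ← ofReal_sin, ← ofReal_sinh]

theorem sin_ofReal_add_ofReal_mul_I_re (s t : ℝ) :
    (sin (s + t * I)).re = Real.sin s * Real.cosh t := by
  simp [sin_add_mul_I, ← ofReal_cos, ← ofReal_cosh, ← ofReal_sin, ← ofReal_sinh]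

theorem sin_ofReal_add_ofReal_mul_I_im (s t : ℝ) :
    (sin (s + t * I)).im = Real.cos s * Real.sinh t := by
  simp [sin_add_mul_I, ← ofReal_cos, ← ofReal_cosh, ← ofReal_sin, ← ofReal_sinh]

end Complex

section PartialDeriv

variable {𝕜 E : Type*} [NontriviallyNormedField 𝕜] [NormedAddCommGroup E] [NormedSpace 𝕜 E]
  {F : 𝕜 × 𝕜 → E} {s t : 𝕜}

theorem fderiv_apply_one_zero (h : DifferentiableAt 𝕜 F (s, t)) :
    fderiv 𝕜 F (s, t) (1, 0) = deriv (fun u => F (u, t)) s :=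
  (h.hasFDerivAt.comp_hasDerivAt s ((hasDerivAt_id s).prodMk (hasDerivAt_const s t))).deriv.symm

theorem fderiv_apply_zero_one (h : DifferentiableAt 𝕜 F (s, t)) :
    fderiv 𝕜 F (s, t) (0, 1) = deriv (fun u => F (s, u)) t :=
  (h.hasFDerivAt.comp_hasDerivAt t ((hasDerivAt_const t s).prodMk (hasDerivAt_id t))).deriv.symm

end PartialDeriv

theorem hasDerivAt_smul_cos_sin (r s : ℝ) :
    HasDerivAt (fun u => r • (cos u, sin u)) (r • (-sin s, cos s)) s :=
  ((hasDerivAt_cos s).prodMk (hasDerivAt_sin s)).const_smul r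

theorem hasDerivAt_sinh_two_mul_sub_two_mul_div_four (t : ℝ) :
    HasDerivAt (fun u => (sinh (2 * u) - 2 * u) / 4) (sinh t ^ 2) t := by
  have h2 : HasDerivAt (fun u : ℝ => 2 * u) 2 t := by
    simpa using (hasDerivAt_id t).const_mul (2 : ℝ)
  refine ((((hasDerivAt_sinh _).comp t h2).sub h2).div_const 4).congr_deriv ?_
  rw [cosh_two_mul, cosh_sq]
  ring

theorem omega2_smul_smul (a b : ℝ) (v w : ℝ × ℝ) :
    omega2 (a • v) (b • w) = a * b * omega2 v w := by
  simp only [omega2, Prod.smul_fst, Prod.smul_snd, smul_eq_mul]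
  ring

theorem omega2_cos_sin_neg_sin_cos (s : ℝ) : omega2 (cos s, sin s) (-sin s, cos s) = 1 := by
  rw [omega2, mul_neg, sub_neg_eq_add, ← sq, ← sq, cos_sq_add_sin_sq]

theorem omega2_self (v : ℝ × ℝ) : omega2 v v = 0 := by
  rw [omega2, mul_comm, sub_self]

theorem stmt16
    (x y : ℝ × ℝ → ℝ × ℝ) (f : ℝ × ℝ → ℝ)
    (hx : ∀ s t : ℝ, x (s, t) =
      ((Complex.cos ((s : ℂ) + t * Complex.I)).re,
       (Complex.sin ((s : ℂ) + t * Complex.I)).re))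
    (hy : ∀ s t : ℝ, y (s, t) =
      ((Complex.cos ((s : ℂ) + t * Complex.I)).im,
       (Complex.sin ((s : ℂ) + t * Complex.I)).im))
    (hf : ∀ s t : ℝ, f (s, t) = (Real.sinh (2 * t) - 2 * t) / 4) :
    ∀ s t : ℝ,
      x (s, t) = Real.cosh t • (Real.cos s, Real.sin s) ∧
      y (s, t) = Real.sinh t • (-Real.sin s, Real.cos s) ∧
      fderiv ℝ f (s, t) (1, 0) = omega2 (fderiv ℝ x (s, t) (1, 0)) (y (s, t)) ∧
      fderiv ℝ f (s, t) (0, 1) = omega2 (fderiv ℝ x (s, t) (0, 1)) (y (s, t)) := by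
  have hx' : x = fun p => cosh p.2 • (cos p.1, sin p.1) := funext fun p => by
    rw [← Prod.mk.eta (p := p), hx, Complex.cos_ofReal_add_ofReal_mul_I_re,
      Complex.sin_ofReal_add_ofReal_mul_I_re, Prod.smul_mk, smul_eq_mul, smul_eq_mul,
      mul_comm, mul_comm (sin _)]
  have hy' : ∀ s t : ℝ, y (s, t) = sinh t • (-sin s, cos s) := fun s t => by
    rw [hy, Complex.cos_ofReal_add_ofReal_mul_I_im, Complex.sin_ofReal_add_ofReal_mul_I_im,
      Prod.smul_mk, smul_eq_mul, smul_eq_mul, mul_neg, mul_comm, mul_comm (cos _)]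
  have hf' : f = fun p => (sinh (2 * p.2) - 2 * p.2) / 4 := funext fun p => by
    rw [← Prod.mk.eta (p := p), hf]
  intro s t
  have hxd : DifferentiableAt ℝ x (s, t) := by rw [hx']; fun_prop
  have hfd : DifferentiableAt ℝ f (s, t) := by rw [hf']; fun_prop
  refine ⟨congrFun hx' _, hy' s t, ?_, ?_⟩
  · rw [fderiv_apply_one_zero hfd, fderiv_apply_one_zero hxd, hy']
    simp only [hx', hf']
    rw [deriv_const, (hasDerivAt_smul_cos_sin (cosh t) s).deriv, omega2_smul_smul,
      omega2_self, mul_zero]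
  · rw [fderiv_apply_zero_one hfd, fderiv_apply_zero_one hxd, hy']
    simp only [hx', hf']
    rw [(hasDerivAt_sinh_two_mul_sub_two_mul_div_four t).deriv,
      ((hasDerivAt_cosh t).smul_const (cos s, sin s)).deriv, omega2_smul_smul,
      omega2_cos_sin_neg_sin_cos, mul_one, sq]
end
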